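/- Fix a ∈ (0,1). Every eigenvalue λ of the problem −y'' = λy, y(0) = y(a) = y(1), is algebraically simple (i.e., dim_ℂ E(λ) = 1) if and only if a is irrational. -/

import Mathlib

open Set

noncomputable section

/-- `lam` is an eigenvalue of the problem `-y'' = lam y`, `y(0) = y(a) = y(1)`. -/
def IsEigA (a : ℝ) (lam : ℂ) : Prop :=
  ∃ y : ℝ → ℂ, ContDiffOn ℝ 2 y (Icc 0 1) ∧
    (∀ x ∈ Icc (0:ℝ) 1, -(iteratedDerivWithin 2 y (Icc (0:ℝ) 1) x) = lam * y x) ∧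
    (∃ x ∈ Icc (0:ℝ) 1, y x ≠ 0) ∧ y 0 = y a ∧ y a = y 1

/-- `u 0, …, u (n-1)` is a Jordan chain of length `n` at `lam` for the problem
`-y'' = lam y`, `y(0) = y(a) = y(1)`. -/
def IsJChainA (a : ℝ) (lam : ℂ) (n : ℕ) (u : ℕ → ℝ → ℂ) : Prop :=
  0 < n ∧
    (∀ k < n, ContDiffOn ℝ 2 (u k) (Icc 0 1) ∧ u k 0 = u k a ∧ u k a = u k 1) ∧
    (∀ x ∈ Icc (0:ℝ) 1,
      -(iteratedDerivWithin 2 (u 0) (Icc (0:ℝ) 1) x) = lam * u 0 x) ∧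
    (∀ k, 0 < k → k < n → ∀ x ∈ Icc (0:ℝ) 1,
      -(iteratedDerivWithin 2 (u k) (Icc (0:ℝ) 1) x) - lam * u k x = u (k - 1) x)

/-- The generalized eigenspace at `lam`, viewed as a set of functions on `[0,1]`:
`0` together with the (restrictions to `[0,1]` of the) last entries of Jordan chains. -/
def genEigA (a : ℝ) (lam : ℂ) : Set ((Icc (0:ℝ) 1) → ℂ) :=
  {z | z = 0 ∨ ∃ n : ℕ, ∃ u : ℕ → ℝ → ℂ,
    IsJChainA a lam n u ∧ (Icc (0:ℝ) 1).restrict (u (n - 1)) = z}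


/-!
Solutions of `-y'' = λ y` are combinations of `e^{cx}` and `e^{-cx}` with `c² = -λ` (of `1` and
`x` if `λ = 0`). With `W = e^{ca}` and `Z = e^{c}`, each of the conditions `y 0 = y a`,
`y 0 = y 1` is either void (`W = 1`, resp. `Z = 1`) or fixes the ratio of the two coefficients.
Both are void only if `ca` and `c` lie in `2πiℤ`, which makes `a` rational; so for irrational `a`
every eigenspace is a line. A second member of a Jordan chain would solve `-v'' - λ v = y`,
whose solutions carry the resonant terms `x e^{±cx}` (resp. `x²`), and these violate one of the
two conditions because `a ≠ 0, 1`. Conversely, for `a = m / k` both `e^{±2πikx}` are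
eigenfunctions for `λ = 4π²k²`.
-/

namespace ThreePointBVP

open Complex

theorem eqOn_Icc_of_hasDerivWithinAt_second_order {s t : ℝ} {lam : ℂ} {r f f' g g' : ℝ → ℂ}
    (hf : ∀ x ∈ Icc s t, HasDerivWithinAt f (f' x) (Icc s t) x)
    (hf' : ∀ x ∈ Icc s t, HasDerivWithinAt f' (-(lam * f x + r x)) (Icc s t) x)
    (hg : ∀ x ∈ Icc s t, HasDerivWithinAt g (g' x) (Icc s t) x)
    (hg' : ∀ x ∈ Icc s t, HasDerivWithinAt g' (-(lam * g x + r x)) (Icc s t) x)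
    (h₀ : f s = g s) (h₀' : f' s = g' s) :
    EqOn f g (Icc s t) := by
  let v : ℝ → ℂ × ℂ → ℂ × ℂ := fun x p => (p.2, -(lam * p.1 + r x))
  have hv : ∀ x, LipschitzWith (1 ⊔ ‖lam‖₊ * 1) (v x) := fun x =>
    LipschitzWith.prod_snd.prodMk fun p q => by
      simpa [v, edist_neg_neg, edist_add_right] using
        ((lipschitzWith_smul lam).comp LipschitzWith.prod_fst) p q
  have traj : ∀ u u' : ℝ → ℂ, (∀ x ∈ Icc s t, HasDerivWithinAt u (u' x) (Icc s t) x) →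
      (∀ x ∈ Icc s t, HasDerivWithinAt u' (-(lam * u x + r x)) (Icc s t) x) →
      ContinuousOn (fun x => (u x, u' x)) (Icc s t) ∧
      ∀ x ∈ Ico s t, HasDerivWithinAt (fun x => (u x, u' x)) (v x (u x, u' x)) (Ici x) x :=
    fun u u' hu hu' =>
      ⟨fun x hx => (hu x hx).continuousWithinAt.prodMk (hu' x hx).continuousWithinAt,
        fun x hx => ((hu x (Ico_subset_Icc_self hx)).prodMk
          (hu' x (Ico_subset_Icc_self hx))).mono_of_mem_nhdsWithin (Icc_mem_nhdsGE_of_mem hx)⟩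
  obtain ⟨hfc, hfd⟩ := traj f f' hf hf'
  obtain ⟨hgc, hgd⟩ := traj g g' hg hg'
  have := ODE_solution_unique_of_mem_Icc_right (s := fun _ => univ)
    (fun x _ => (hv x).lipschitzOnWith) hfc hfd (fun _ _ => trivial) hgc hgd (fun _ _ => trivial)
    (Prod.ext h₀ h₀')
  exact fun x hx => congrArg Prod.fst (this hx)

theorem hasDerivWithinAt_derivWithin_of_contDiffOn_two {s t : ℝ} (hst : s < t)
    {w : ℝ → ℂ} (hw : ContDiffOn ℝ 2 w (Icc s t)) {x : ℝ} (hx : x ∈ Icc s t) :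
    HasDerivWithinAt w (derivWithin w (Icc s t) x) (Icc s t) x ∧
    HasDerivWithinAt (derivWithin w (Icc s t)) (iteratedDerivWithin 2 w (Icc s t) x)
      (Icc s t) x := by
  refine ⟨(hw.differentiableOn (by norm_num) x hx).hasDerivWithinAt, ?_⟩
  have h := ((hw.derivWithin (uniqueDiffOn_Icc hst) (by norm_num : (1 : WithTop ℕ∞) + 1 ≤ 2)
    ).differentiableOn one_ne_zero x hx).hasDerivWithinAt
  rwa [iteratedDerivWithin_succ, iteratedDerivWithin_one]

theorem hasDerivAt_affine_mul_cexp (A B c : ℂ) (x : ℝ) :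
    HasDerivAt (fun x : ℝ => (A + B * x) * exp (c * x))
      ((B + c * A + c * B * x) * exp (c * x)) x := by
  have hx : HasDerivAt (fun x : ℝ => (x : ℂ)) 1 x := (hasDerivAt_id x).ofReal_comp
  have he : HasDerivAt (fun x : ℝ => exp (c * x)) (exp (c * x) * c) x :=
    (by simpa using hx.const_mul c : HasDerivAt (fun x : ℝ => c * x) c x).cexp
  exact (((hx.const_mul B).const_add A).mul he).congr_deriv (by ring)

theorem eqOn_of_hasDerivAt_of_solves {lam : ℂ} {r w g g' : ℝ → ℂ}
    (hw : ContDiffOn ℝ 2 w (Icc 0 1))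
    (hode : ∀ x ∈ Icc (0:ℝ) 1, -iteratedDerivWithin 2 w (Icc 0 1) x - lam * w x = r x)
    (hg : ∀ x, HasDerivAt g (g' x) x) (hg' : ∀ x, HasDerivAt g' (-(lam * g x + r x)) x)
    (h₀ : w 0 = g 0) (h₀' : derivWithin w (Icc 0 1) 0 = g' 0) :
    EqOn w g (Icc 0 1) := by
  have hw' x (hx : x ∈ Icc (0:ℝ) 1) := hasDerivWithinAt_derivWithin_of_contDiffOn_two one_pos hw hx
  refine eqOn_Icc_of_hasDerivWithinAt_second_order (fun x hx => (hw' x hx).1) (fun x hx => ?_)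
    (fun x _ => (hg x).hasDerivWithinAt) (fun x _ => (hg' x).hasDerivWithinAt) h₀ h₀'
  convert (hw' x hx).2 using 1
  linear_combination hode x hx

theorem exists_eqOn_of_forced_cexp {lam c γ δ : ℂ} (hc : c ≠ 0) (hc2 : c ^ 2 = -lam)
    {w : ℝ → ℂ} (hw : ContDiffOn ℝ 2 w (Icc 0 1))
    (hode : ∀ x ∈ Icc (0:ℝ) 1, -iteratedDerivWithin 2 w (Icc 0 1) x - lam * w x =
      γ * exp (c * x) + δ * exp (-c * x)) :
    ∃ α β : ℂ, EqOn w (fun x : ℝ => (α + -γ / (2 * c) * x) * exp (c * x) +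
      (β + δ / (2 * c) * x) * exp (-c * x)) (Icc 0 1) := by
  obtain rfl : lam = -c ^ 2 := by rw [hc2, neg_neg]
  set B₁ := -γ / (2 * c)
  set B₂ := δ / (2 * c)
  -- match `w 0` and `w' 0 = c (α - β) + B₁ + B₂`
  set s := (derivWithin w (Icc 0 1) 0 - B₁ - B₂) / c
  refine ⟨(w 0 + s) / 2, (w 0 - s) / 2, eqOn_of_hasDerivAt_of_solves hw hode
    (fun x => (hasDerivAt_affine_mul_cexp _ B₁ c x).add (hasDerivAt_affine_mul_cexp _ B₂ (-c) x))
    (fun x => ((hasDerivAt_affine_mul_cexp _ _ c x).add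
      (hasDerivAt_affine_mul_cexp _ _ (-c) x)).congr_deriv ?_) ?_ ?_⟩
  · simp only [B₁, B₂]
    field_simp
    ring
  · simp only [ofReal_zero, mul_zero, add_zero, exp_zero, mul_one]
    ring
  · simp only [ofReal_zero, mul_zero, add_zero, exp_zero, mul_one, neg_mul, s]
    field_simp
    ring

theorem exists_eqOn_of_forced_const {d : ℂ} {w : ℝ → ℂ} (hw : ContDiffOn ℝ 2 w (Icc 0 1))
    (hode : ∀ x ∈ Icc (0:ℝ) 1, -iteratedDerivWithin 2 w (Icc 0 1) x - 0 * w x = d) :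
    ∃ α β : ℂ, EqOn w (fun x : ℝ => α + β * x - d / 2 * x ^ 2) (Icc 0 1) := by
  have hx (x : ℝ) : HasDerivAt (fun x : ℝ => (x : ℂ)) 1 x := (hasDerivAt_id x).ofReal_comp
  refine ⟨w 0, derivWithin w (Icc 0 1) 0, eqOn_of_hasDerivAt_of_solves hw hode
    (g' := fun x => derivWithin w (Icc 0 1) 0 - d * x)
    (fun x => (((hx x).const_mul _).const_add _).sub (((hx x).pow 2).const_mul _) |>.congr_deriv
      (by ring))
    (fun x => (((hx x).const_mul d).const_sub _).congr_deriv (by ring)) (by simp) (by simp)⟩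

structure SolvesBVP (a : ℝ) (lam : ℂ) (r w : ℝ → ℂ) : Prop where
  contDiffOn : ContDiffOn ℝ 2 w (Icc 0 1)
  ode : ∀ x ∈ Icc (0:ℝ) 1, -iteratedDerivWithin 2 w (Icc 0 1) x - lam * w x = r x
  bc_a : w 0 = w a
  bc_one : w a = w 1

namespace SolvesBVP

variable {a : ℝ} {lam : ℂ} {r w : ℝ → ℂ}

theorem smul (h : SolvesBVP a lam r w) (d : ℂ) : SolvesBVP a lam (d • r) (d • w) where
  contDiffOn := h.contDiffOn.const_smul d
  ode x hx := by
    simp only [iteratedDerivWithin_const_smul_field, Pi.smul_apply, smul_eq_mul, ← h.ode x hx]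
    ring
  bc_a := by simp only [Pi.smul_apply, h.bc_a]
  bc_one := by simp only [Pi.smul_apply, h.bc_one]

theorem congr_forcing (h : SolvesBVP a lam r w) {r' : ℝ → ℂ} (hr : EqOn r r' (Icc 0 1)) :
    SolvesBVP a lam r' w :=
  { h with ode := fun x hx => (h.ode x hx).trans (hr hx) }

theorem ode_zero (h : SolvesBVP a lam 0 w) :
    ∀ x ∈ Icc (0:ℝ) 1, -iteratedDerivWithin 2 w (Icc 0 1) x = lam * w x :=
  fun x hx => sub_eq_zero.mp (h.ode x hx)

end SolvesBVP

theorem isEigA_iff {a : ℝ} {lam : ℂ} :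
    IsEigA a lam ↔ ∃ y, SolvesBVP a lam 0 y ∧ ∃ x ∈ Icc (0:ℝ) 1, y x ≠ 0 := by
  constructor
  · rintro ⟨y, hy, hode, hne, hb₁, hb₂⟩
    exact ⟨y, ⟨hy, fun x hx => by simp [hode x hx], hb₁, hb₂⟩, hne⟩
  · rintro ⟨y, hy, hne⟩
    exact ⟨y, hy.contDiffOn, hy.ode_zero, hne, hy.bc_a, hy.bc_one⟩

namespace IsJChainA

variable {a : ℝ} {lam : ℂ} {n : ℕ} {u : ℕ → ℝ → ℂ}

theorem solvesBVP_zero (h : IsJChainA a lam n u) : SolvesBVP a lam 0 (u 0) :=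
  have ⟨hreg, hb₁, hb₂⟩ := h.2.1 0 h.1
  ⟨hreg, fun x hx => by simp [h.2.2.1 x hx], hb₁, hb₂⟩

theorem solvesBVP_succ (h : IsJChainA a lam n u) {k : ℕ} (hk : k + 1 < n) :
    SolvesBVP a lam (u k) (u (k + 1)) :=
  have ⟨hreg, hb₁, hb₂⟩ := h.2.1 (k + 1) hk
  ⟨hreg, h.2.2.2 (k + 1) k.succ_pos hk, hb₁, hb₂⟩

end IsJChainA

theorem domRestrict_mem_genEigA {a : ℝ} {lam : ℂ} {y : ℝ → ℂ} (hy : SolvesBVP a lam 0 y) :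
    (Icc (0:ℝ) 1).domRestrict y ∈ genEigA a lam :=
  Or.inr ⟨1, fun _ => y, ⟨one_pos, fun _ _ => ⟨hy.contDiffOn, hy.bc_a, hy.bc_one⟩,
    hy.ode_zero, fun k hk hk' => by omega⟩, rfl⟩

theorem genEigA_eq_span {a : ℝ} {lam : ℂ} {y : ℝ → ℂ} (hy : SolvesBVP a lam 0 y)
    (hsimple : ∀ u, SolvesBVP a lam 0 u → ∃ d : ℂ, EqOn u (d • y) (Icc 0 1))
    (hchain : ∀ v, ¬ SolvesBVP a lam y v) :
    genEigA a lam = Submodule.span ℂ {(Icc (0:ℝ) 1).domRestrict y} := by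
  ext z
  simp only [SetLike.mem_coe, Submodule.mem_span_singleton]
  constructor
  · rintro (rfl | ⟨n, u, hu, rfl⟩)
    · exact ⟨0, zero_smul ℂ _⟩
    have hmultiple : ∀ k < n, ∃ d : ℂ, EqOn (u k) (d • y) (Icc 0 1) := by
      intro k
      induction k with
      | zero => exact fun _ => hsimple _ (IsJChainA.solvesBVP_zero hu)
      | succ k ih =>
        intro hk
        obtain ⟨d, hd⟩ := ih (by omega)
        have hsol := IsJChainA.solvesBVP_succ hu hk
        by_cases hd0 : d = 0
        · exact hsimple _ (hsol.congr_forcing (by simpa [hd0] using hd))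
        · refine absurd ((hsol.smul d⁻¹).congr_forcing fun x hx => ?_) (hchain _)
          simp [hd hx, hd0]
    obtain ⟨d, hd⟩ := hmultiple (n - 1) (by have := hu.1; omega)
    exact ⟨d, funext fun x => (hd x.2).symm⟩
  · rintro ⟨d, rfl⟩
    exact domRestrict_mem_genEigA ((hy.smul d).congr_forcing (by simp [EqOn]))

theorem not_irrational_of_cexp_eq_one {a : ℝ} {c : ℂ} (hc : c ≠ 0) (ha : exp (c * a) = 1)
    (h1 : exp c = 1) : ¬ Irrational a := by
  obtain ⟨n, hn⟩ := exp_eq_one_iff.mp ha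
  obtain ⟨k, hk⟩ := exp_eq_one_iff.mp h1
  have hk0 : k ≠ 0 := by rintro rfl; simp_all
  have hak : ((a * k : ℝ) : ℂ) = n := by
    apply mul_right_cancel₀ two_pi_I_ne_zero
    push_cast
    linear_combination hn - a * hk
  exact fun h => (h.mul_intCast hk0).ne_int n (by exact_mod_cast hak)

theorem eq_one_or_eq_mul_of_add_eq {p q E : ℂ} (hE : E ≠ 0) (h : p + q = p * E + q * E⁻¹) :
    E = 1 ∨ q = p * E := by
  have hEE : E * E⁻¹ = 1 := mul_inv_cancel₀ hE
  have h2 : (E - 1) * (p * E - q) = 0 := by linear_combination (-E) * h - q * hEE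
  rcases mul_eq_zero.mp h2 with h | h
  · exact Or.inl (by linear_combination h)
  · exact Or.inr (by linear_combination -h)

theorem exists_eq_mul_of_add_eq {W Z : ℂ} (hW : W ≠ 0) (hZ : Z ≠ 0) (hWZ : ¬(W = 1 ∧ Z = 1)) :
    ∃ τ : ℂ, ∀ γ δ : ℂ, γ + δ = γ * W + δ * W⁻¹ → γ + δ = γ * Z + δ * Z⁻¹ → δ = γ * τ := by
  by_cases hW1 : W = 1
  · exact ⟨Z, fun γ δ _ h => (eq_one_or_eq_mul_of_add_eq hZ h).resolve_left (hWZ ⟨hW1, ·⟩)⟩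
  · exact ⟨W, fun γ δ h _ => (eq_one_or_eq_mul_of_add_eq hW h).resolve_left hW1⟩

/-- `h₁` and `h₂` say that `v = (α - p x) e^{cx} + (β + p τ x) e^{-cx}` satisfies
`v 0 = v a` and `v 0 = v 1`, where `W = e^{ca}` and `Z = e^{c}`. -/
theorem resonant_bc_inconsistent {a W Z τ p α β : ℂ} (hW : W ≠ 0) (hZ : Z ≠ 0)
    (hWZ : ¬(W = 1 ∧ Z = 1)) (ha₀ : a ≠ 0) (ha₁ : a ≠ 1) (hp : p ≠ 0)
    (hτW : 1 + τ = W + τ * W⁻¹) (hτZ : 1 + τ = Z + τ * Z⁻¹)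
    (h₁ : α + β = (α - p * a) * W + (β + p * τ * a) * W⁻¹)
    (h₂ : α + β = (α - p) * Z + (β + p * τ) * Z⁻¹) : False := by
  have hτW' : W = 1 ∨ τ = W := by
    simpa using eq_one_or_eq_mul_of_add_eq (p := 1) hW (by rwa [one_mul])
  have hτZ' : Z = 1 ∨ τ = Z := by
    simpa using eq_one_or_eq_mul_of_add_eq (p := 1) hZ (by rwa [one_mul])
  by_cases hW1 : W = 1
  · subst W
    have hZ1 : Z ≠ 1 := fun h => hWZ ⟨rfl, h⟩
    have : p * a * (Z - 1) = 0 := by linear_combination -h₁ - p * a * hτZ'.resolve_left hZ1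
    simp [hp, ha₀, sub_eq_zero, hZ1] at this
  have hτ : τ = W := hτW'.resolve_left hW1
  subst τ
  by_cases hZ1 : Z = 1
  · subst Z
    have : p * (W - 1) = 0 := by linear_combination -h₂
    simp [hp, sub_eq_zero, hW1] at this
  have hWZ : W = Z := hτZ'.resolve_left hZ1
  subst Z
  have : p * (W - 1) * (a - 1) = 0 := by
    linear_combination h₁ - h₂ + p * (a - 1) * mul_inv_cancel₀ hW
  simp [hp, sub_eq_zero, hW1, ha₁] at this

section Nonzero

variable {a : ℝ} {lam c : ℂ} (hc : c ≠ 0) (hc2 : c ^ 2 = -lam)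
include hc hc2

theorem SolvesBVP.exists_eqOn_cexp {w : ℝ → ℂ} (hw : SolvesBVP a lam 0 w)
    (ha : a ∈ Icc (0:ℝ) 1) :
    ∃ γ δ : ℂ, EqOn w (fun x : ℝ => γ * exp (c * x) + δ * exp (-c * x)) (Icc 0 1) ∧
      γ + δ = γ * exp (c * a) + δ * (exp (c * a))⁻¹ ∧ γ + δ = γ * exp c + δ * (exp c)⁻¹ := by
  obtain ⟨γ, δ, hrep⟩ := exists_eqOn_of_forced_cexp (γ := 0) (δ := 0) hc hc2 hw.contDiffOn
    fun x hx => by simpa using hw.ode x hx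
  have hrep' : EqOn w (fun x : ℝ => γ * exp (c * x) + δ * exp (-c * x)) (Icc 0 1) :=
    fun x hx => by simpa using hrep hx
  refine ⟨γ, δ, hrep', ?_, ?_⟩
  · simpa [hrep' (left_mem_Icc.2 zero_le_one), hrep' ha, exp_neg] using hw.bc_a
  · simpa [hrep' (left_mem_Icc.2 zero_le_one), hrep' (right_mem_Icc.2 zero_le_one), exp_neg] using
      hw.bc_a.trans hw.bc_one

variable {y : ℝ → ℂ} (hy : SolvesBVP a lam 0 y) (hy₀ : ∃ x ∈ Icc (0:ℝ) 1, y x ≠ 0)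
  (hexp : ¬(exp (c * a) = 1 ∧ exp c = 1))
include hy hy₀ hexp

theorem SolvesBVP.exists_eqOn_smul_of_ne_zero (ha : a ∈ Icc (0:ℝ) 1) {u : ℝ → ℂ}
    (hu : SolvesBVP a lam 0 u) : ∃ d : ℂ, EqOn u (d • y) (Icc 0 1) := by
  obtain ⟨τ, hτ⟩ := exists_eq_mul_of_add_eq (exp_ne_zero _) (exp_ne_zero _) hexp
  obtain ⟨γ, δ, hy', hy₁, hy₂⟩ := hy.exists_eqOn_cexp hc hc2 ha
  obtain ⟨γ₀, δ₀, hu', hu₁, hu₂⟩ := hu.exists_eqOn_cexp hc hc2 ha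
  obtain rfl := hτ γ δ hy₁ hy₂
  obtain rfl := hτ γ₀ δ₀ hu₁ hu₂
  have hγ : γ ≠ 0 := by
    rintro rfl
    obtain ⟨x, hx, hyx⟩ := hy₀
    simp [hy' hx] at hyx
  refine ⟨γ₀ / γ, fun x hx => ?_⟩
  rw [hu' hx, Pi.smul_apply, hy' hx, smul_eq_mul]
  field_simp

theorem SolvesBVP.not_solvesBVP_of_ne_zero (ha : a ∈ Ioo (0:ℝ) 1) (v : ℝ → ℂ) :
    ¬ SolvesBVP a lam y v := by
  intro hv
  have haI : a ∈ Icc (0:ℝ) 1 := Ioo_subset_Icc_self ha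
  obtain ⟨τ, hτ⟩ := exists_eq_mul_of_add_eq (exp_ne_zero _) (exp_ne_zero _) hexp
  obtain ⟨γ, δ, hy', hy₁, hy₂⟩ := hy.exists_eqOn_cexp hc hc2 haI
  obtain rfl := hτ γ δ hy₁ hy₂
  have hγ : γ ≠ 0 := by
    rintro rfl
    obtain ⟨x, hx, hyx⟩ := hy₀
    simp [hy' hx] at hyx
  obtain ⟨α, β, hv'⟩ := exists_eqOn_of_forced_cexp (γ := γ) (δ := γ * τ) hc hc2 hv.contDiffOn
    fun x hx => (hv.ode x hx).trans (hy' hx)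
  have h₁ := hv.bc_a
  have h₂ := hv.bc_a.trans hv.bc_one
  rw [hv' (left_mem_Icc.2 zero_le_one), hv' haI] at h₁
  rw [hv' (left_mem_Icc.2 zero_le_one), hv' (right_mem_Icc.2 zero_le_one)] at h₂
  simp only [neg_mul, exp_neg, ofReal_zero, ofReal_one, mul_zero, mul_one, exp_zero] at h₁ h₂
  exact resonant_bc_inconsistent (τ := τ) (p := γ / (2 * c)) (α := α) (β := β)
    (exp_ne_zero _) (exp_ne_zero _) hexp (ofReal_ne_zero.2 ha.1.ne') (by exact_mod_cast ha.2.ne)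
    (div_ne_zero hγ (by simpa using hc)) (mul_left_cancel₀ hγ (by linear_combination hy₁))
    (mul_left_cancel₀ hγ (by linear_combination hy₂)) (by linear_combination h₁)
    (by linear_combination h₂)

end Nonzero

section Zero

variable {a : ℝ} (ha : a ∈ Ioo (0:ℝ) 1)
include ha

theorem SolvesBVP.eqOn_const_of_zero {w : ℝ → ℂ} (hw : SolvesBVP a 0 0 w) :
    EqOn w (fun _ => w 0) (Icc 0 1) := by
  obtain ⟨α, β, hrep⟩ := exists_eqOn_of_forced_const (d := 0) hw.contDiffOn hw.ode
  have h₁ := hw.bc_a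
  rw [hrep (left_mem_Icc.2 zero_le_one), hrep (Ioo_subset_Icc_self ha)] at h₁
  simp only [ofReal_zero] at h₁
  have hβ : β * a = 0 := by linear_combination -h₁
  have hβ : β = 0 := by simpa [ha.1.ne'] using hβ
  intro x hx
  simp [hrep hx, hrep (left_mem_Icc.2 zero_le_one), hβ]

variable {y : ℝ → ℂ} (hy : SolvesBVP a 0 0 y) (hy₀ : ∃ x ∈ Icc (0:ℝ) 1, y x ≠ 0)
include hy hy₀

theorem SolvesBVP.apply_zero_ne_zero : y 0 ≠ 0 := by
  obtain ⟨x, hx, hyx⟩ := hy₀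
  rwa [hy.eqOn_const_of_zero ha hx] at hyx

theorem SolvesBVP.exists_eqOn_smul_of_zero {u : ℝ → ℂ} (hu : SolvesBVP a 0 0 u) :
    ∃ d : ℂ, EqOn u (d • y) (Icc 0 1) := by
  refine ⟨u 0 / y 0, fun x hx => ?_⟩
  rw [hu.eqOn_const_of_zero ha hx, Pi.smul_apply, hy.eqOn_const_of_zero ha hx, smul_eq_mul,
    div_mul_cancel₀ _ (hy.apply_zero_ne_zero ha hy₀)]

theorem SolvesBVP.not_solvesBVP_of_zero (v : ℝ → ℂ) : ¬ SolvesBVP a 0 y v := by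
  intro hv
  obtain ⟨α, β, hrep⟩ := exists_eqOn_of_forced_const hv.contDiffOn
    fun x hx => (hv.ode x hx).trans (hy.eqOn_const_of_zero ha hx)
  have h₁ := hv.bc_a
  have h₂ := hv.bc_a.trans hv.bc_one
  rw [hrep (left_mem_Icc.2 zero_le_one), hrep (Ioo_subset_Icc_self ha)] at h₁
  rw [hrep (left_mem_Icc.2 zero_le_one), hrep (right_mem_Icc.2 zero_le_one)] at h₂
  simp only [ofReal_zero, ofReal_one] at h₁ h₂
  have : y 0 * a * (1 - a) = 0 := by linear_combination 2 * a * h₂ - 2 * h₁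
  have ha₁ : (1 : ℂ) ≠ a := by exact_mod_cast ha.2.ne'
  simp [hy.apply_zero_ne_zero ha hy₀, ha.1.ne', sub_eq_zero, ha₁] at this

end Zero

theorem genEigA_eq_span_of_irrational {a : ℝ} (ha : a ∈ Ioo (0:ℝ) 1) (hirr : Irrational a)
    {lam : ℂ} {y : ℝ → ℂ} (hy : SolvesBVP a lam 0 y) (hy₀ : ∃ x ∈ Icc (0:ℝ) 1, y x ≠ 0) :
    genEigA a lam = Submodule.span ℂ {(Icc (0:ℝ) 1).domRestrict y} := by
  rcases eq_or_ne lam 0 with rfl | hlam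
  · exact genEigA_eq_span hy (fun _ => hy.exists_eqOn_smul_of_zero ha hy₀)
      (hy.not_solvesBVP_of_zero ha hy₀)
  obtain ⟨c, hc2⟩ := IsAlgClosed.exists_pow_nat_eq (-lam) two_pos
  have hc : c ≠ 0 := by rintro rfl; simp_all
  have hexp : ¬(exp (c * a) = 1 ∧ exp c = 1) := fun h =>
    not_irrational_of_cexp_eq_one hc h.1 h.2 hirr
  exact genEigA_eq_span hy
    (fun _ => hy.exists_eqOn_smul_of_ne_zero hc hc2 hy₀ hexp (Ioo_subset_Icc_self ha))
    (hy.not_solvesBVP_of_ne_zero hc hc2 hy₀ hexp ha)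

theorem iteratedDerivWithin_two_cexp_mul (c : ℂ) {x : ℝ} (hx : x ∈ Icc (0:ℝ) 1) :
    iteratedDerivWithin 2 (fun x : ℝ => exp (c * x)) (Icc 0 1) x = c ^ 2 * exp (c * x) := by
  have h₁ : EqOn (derivWithin (fun x : ℝ => exp (c * x)) (Icc 0 1)) (fun x => c * exp (c * x))
      (Icc 0 1) := fun y hy => by
    simpa using ((hasDerivAt_affine_mul_cexp 1 0 c y).hasDerivWithinAt).derivWithin
      (uniqueDiffOn_Icc one_pos y hy)
  rw [iteratedDerivWithin_succ, iteratedDerivWithin_one, derivWithin_congr h₁ (h₁ hx)]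
  simpa [pow_two, mul_assoc] using ((hasDerivAt_affine_mul_cexp c 0 c x).hasDerivWithinAt
    ).derivWithin (uniqueDiffOn_Icc one_pos x hx)

theorem solvesBVP_cexp {a : ℝ} {c : ℂ} (ha : exp (c * a) = 1) (h₁ : exp c = 1) :
    SolvesBVP a (-c ^ 2) 0 (fun x : ℝ => exp (c * x)) where
  contDiffOn := (contDiff_const.mul ofRealCLM.contDiff).cexp.contDiffOn
  ode x hx := by simp [iteratedDerivWithin_two_cexp_mul c hx]
  bc_a := by simp [ha]
  bc_one := by simp [ha, h₁]

theorem finrank_ne_one_of_forall_smul_ne {K M : Type*} [Field K] [AddCommGroup M] [Module K M]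
    {V : Submodule K M} {f g : M} (hf : f ∈ V) (hg : g ∈ V) (hf₀ : f ≠ 0)
    (hfg : ∀ r : K, r • f ≠ g) : Module.finrank K V ≠ 1 := fun h => by
  obtain ⟨r, hr⟩ := (finrank_eq_one_iff_of_nonzero' ⟨f, hf⟩ (by simpa using hf₀)).mp h ⟨g, hg⟩
  exact hfg r (congrArg Subtype.val hr)

/-- For `a = m / k`, `e^{±2πikx}` are two independent eigenfunctions for `λ = 4π²k²`. -/
theorem exists_independent_of_not_irrational {a : ℝ} (ha : ¬ Irrational a) :
    ∃ lam : ℂ, IsEigA a lam ∧ ∃ f ∈ genEigA a lam, ∃ g ∈ genEigA a lam,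
      f ≠ 0 ∧ ∀ r : ℂ, r • f ≠ g := by
  obtain ⟨q, rfl⟩ : ∃ q : ℚ, (q : ℝ) = a := by simpa [Irrational] using ha
  set c : ℂ := q.den * (2 * Real.pi * I)
  have hca : exp (c * (q : ℝ)) = 1 := by
    have h : (q.den : ℂ) * q = q.num := by exact_mod_cast q.den_mul_eq_num
    rw [show c * ((q : ℝ) : ℂ) = q.num * (2 * Real.pi * I) by rw [← h]; push_cast; ring]
    exact exp_int_mul_two_pi_mul_I _
  have hc₁ : exp c = 1 := exp_nat_mul_two_pi_mul_I _
  have hsol := solvesBVP_cexp hca hc₁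
  have hsol' := solvesBVP_cexp (c := -c) (by rw [neg_mul, exp_neg, hca, inv_one])
    (by rw [exp_neg, hc₁, inv_one])
  rw [neg_sq] at hsol'
  have h₀ : (0 : ℝ) ∈ Icc (0:ℝ) 1 := left_mem_Icc.2 zero_le_one
  -- at `x = 1/4k` the two exponentials are `e^{± iπ/2} = ± i`
  have hx : 1 / (4 * q.den : ℝ) ∈ Icc (0:ℝ) 1 :=
    ⟨by positivity, div_le_one_of_le₀ (by have := q.pos; norm_cast; omega) (by positivity)⟩
  have hcx : c * ((1 / (4 * q.den : ℝ) : ℝ) : ℂ) = Real.pi / 2 * I := by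
    simp only [c]; push_cast; field_simp; ring
  refine ⟨-c ^ 2, isEigA_iff.2 ⟨_, hsol, 0, h₀, by simp⟩, _, domRestrict_mem_genEigA hsol, _,
    domRestrict_mem_genEigA hsol', fun h => by simpa using congrFun h ⟨0, h₀⟩, fun r hr => ?_⟩
  have hr₀ := congrFun hr ⟨0, h₀⟩
  have hr₁ := congrFun hr ⟨_, hx⟩
  simp only [Pi.smul_apply, domRestrict_apply, smul_eq_mul, neg_mul, hcx] at hr₀ hr₁
  simp only [ofReal_zero, mul_zero, exp_zero, mul_one, neg_zero] at hr₀
  simp [hr₀, exp_neg, self_eq_neg] at hr₁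

end ThreePointBVP

theorem stmt13 (a : ℝ) (ha : a ∈ Ioo (0:ℝ) 1) :
    (∀ lam : ℂ, IsEigA a lam →
      ∃ V : Submodule ℂ ((Icc (0:ℝ) 1) → ℂ),
        (V : Set ((Icc (0:ℝ) 1) → ℂ)) = genEigA a lam ∧
        FiniteDimensional ℂ V ∧ Module.finrank ℂ V = 1) ↔
    Irrational a := by
  constructor
  · intro h
    by_contra hirr
    obtain ⟨lam, hlam, f, hf, g, hg, hf₀, hfg⟩ :=
      ThreePointBVP.exists_independent_of_not_irrational hirr
    obtain ⟨V, hV, -, hrank⟩ := h lam hlam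
    rw [← hV] at hf hg
    exact ThreePointBVP.finrank_ne_one_of_forall_smul_ne hf hg hf₀ hfg hrank
  · intro hirr lam hlam
    obtain ⟨y, hy, x, hx, hyx⟩ := ThreePointBVP.isEigA_iff.1 hlam
    have hy₀ : (Icc (0:ℝ) 1).domRestrict y ≠ 0 := fun h => hyx (congrFun h ⟨x, hx⟩)
    exact ⟨_, (ThreePointBVP.genEigA_eq_span_of_irrational ha hirr hy ⟨x, hx, hyx⟩).symm,
      inferInstance, finrank_span_singleton hy₀⟩
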